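/- arXiv:1008.2435 — 3 statements merged into one kernel-verified Lean document; each statement's English description precedes it below -/
import Mathlib

section
/- Let 𝔤_λ be a generic oscillator Lie algebra and let ξ(u) = ad_u† r + 2 e₀ ∧ ((J + ad_{u₀})(u)) be a Lie bialgebra structure on 𝔤_λ, where r ∈ ⋀²S, u₀ ∈ S, and J is a derivation of 𝔤_λ commuting with ad_{e₋₁} with J(e₋₁) = J(e₀) = 0. Then the dual Lie algebra (𝔤_λ*, [·,·]*) is solvable. Moreover, (𝔤_λ*, [·,·]*) is unimodular (i.e., the trace of the adjoint map ad_α vanishes for every α ∈ 𝔤_λ*) if and only if Σ_{i=1}^n r(eᵢ*, ěᵢ*) = 0. -/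
open Module LinearMap

noncomputable section

/-- Index type for the basis of an oscillator Lie algebra:
`Sum.inl 0 ↦ e₋₁`, `Sum.inl 1 ↦ e₀`, `Sum.inr (Sum.inl i) ↦ eᵢ`,
`Sum.inr (Sum.inr i) ↦ ěᵢ`. -/
abbrev OscIdx (n : ℕ) := Fin 2 ⊕ (Fin n ⊕ Fin n)

/-- The oscillator Lie algebra `𝔤_λ`: a real Lie algebra `L` together with a basis
`{e₋₁, e₀, e₁, …, eₙ, ě₁, …, ěₙ}` whose nonzero brackets on basis vectors are
`[e₋₁, eⱼ] = λⱼ ěⱼ`, `[e₋₁, ěⱼ] = −λⱼ eⱼ`, `[eⱼ, ěⱼ] = e₀` (all other brackets of the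
basis vectors vanish or follow by antisymmetry; in particular `e₀` is central). -/
structure OscAlg (n : ℕ) (lam : Fin n → ℝ) (L : Type) [LieRing L] [LieAlgebra ℝ L] where
  basis : Basis (OscIdx n) ℝ L
  bracket_em_e : ∀ j, ⁅basis (Sum.inl 0), basis (Sum.inr (Sum.inl j))⁆
      = lam j • basis (Sum.inr (Sum.inr j))
  bracket_em_f : ∀ j, ⁅basis (Sum.inl 0), basis (Sum.inr (Sum.inr j))⁆
      = -lam j • basis (Sum.inr (Sum.inl j))
  bracket_e_f : ∀ i j, ⁅basis (Sum.inr (Sum.inl i)), basis (Sum.inr (Sum.inr j))⁆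
      = if i = j then basis (Sum.inl 1) else 0
  bracket_e_e : ∀ i j, ⁅basis (Sum.inr (Sum.inl i)), basis (Sum.inr (Sum.inl j))⁆ = 0
  bracket_f_f : ∀ i j, ⁅basis (Sum.inr (Sum.inr i)), basis (Sum.inr (Sum.inr j))⁆ = 0
  bracket_e0 : ∀ x : L, ⁅basis (Sum.inl 1), x⁆ = 0

/-- `0 < λ₁ ≤ … ≤ λₙ`: the standing assumption on the parameters of an oscillator
Lie algebra. -/
def OscParam {n : ℕ} (lam : Fin n → ℝ) : Prop := (∀ i, 0 < lam i) ∧ Monotone lam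

/-- Genericity: `0 < λ₁ < … < λₙ` and `λ_k ≠ λ_i + λ_j` for all `i < j < k`. -/
def IsGeneric {n : ℕ} (lam : Fin n → ℝ) : Prop :=
  (∀ i, 0 < lam i) ∧ StrictMono lam ∧
    ∀ i j k : Fin n, i < j → j < k → lam k ≠ lam i + lam j

namespace OscAlg

variable {n : ℕ} {lam : Fin n → ℝ} {L : Type} [LieRing L] [LieAlgebra ℝ L]

/-- `e₋₁`. -/
def em (B : OscAlg n lam L) : L := B.basis (Sum.inl 0)
/-- `e₀`. -/
def e0 (B : OscAlg n lam L) : L := B.basis (Sum.inl 1)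
/-- `eᵢ`. -/
def e (B : OscAlg n lam L) (i : Fin n) : L := B.basis (Sum.inr (Sum.inl i))
/-- `ěᵢ`. -/
def f (B : OscAlg n lam L) (i : Fin n) : L := B.basis (Sum.inr (Sum.inr i))
/-- `e₋₁*`, an element of the dual basis. -/
def em' (B : OscAlg n lam L) : Dual ℝ L := B.basis.coord (Sum.inl 0)
/-- `e₀*`. -/
def e0' (B : OscAlg n lam L) : Dual ℝ L := B.basis.coord (Sum.inl 1)
/-- `eᵢ*`. -/
def e' (B : OscAlg n lam L) (i : Fin n) : Dual ℝ L := B.basis.coord (Sum.inr (Sum.inl i))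
/-- `ěᵢ*`. -/
def f' (B : OscAlg n lam L) (i : Fin n) : Dual ℝ L := B.basis.coord (Sum.inr (Sum.inr i))

/-- The subspace `S` spanned by the `eᵢ, ěᵢ`. -/
def S (B : OscAlg n lam L) : Submodule ℝ L :=
  Submodule.span ℝ (Set.range B.e ∪ Set.range B.f)

/-- The `2`-form `ω` on `𝔤_λ`, viewed as a linear map `𝔤_λ → 𝔤_λ*`:
`ω(e₋₁,·) = ω(e₀,·) = 0`, `ω(eᵢ,eⱼ) = ω(ěᵢ,ěⱼ) = 0`, `ω(eᵢ,ěⱼ) = δᵢⱼ`. -/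
def om (B : OscAlg n lam L) : L →ₗ[ℝ] Dual ℝ L :=
  ∑ i : Fin n, ((B.e' i).smulRight (B.f' i) - (B.f' i).smulRight (B.e' i))

/-- The derivation `J_a` of `𝔤_λ` given by `J_a(e₋₁) = J_a(e₀) = 0`, `J_a(eᵢ) = aᵢ ěᵢ`,
`J_a(ěᵢ) = −aᵢ eᵢ`. -/
def Ja (B : OscAlg n lam L) (a : Fin n → ℝ) : L →ₗ[ℝ] L :=
  B.basis.constr ℝ (Sum.elim (fun _ => (0 : L))
    (Sum.elim (fun i => a i • B.f i) (fun i => -(a i) • B.e i)))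

end OscAlg

section Bivectors

variable {L : Type} [LieRing L] [LieAlgebra ℝ L]

/-- `x ∧ y`, viewed as the linear map `𝔤* → 𝔤`, `α ↦ α(x) y − α(y) x`; this corresponds
to the skew-symmetric bilinear form `(α,β) ↦ α(x)β(y) − α(y)β(x)` on `𝔤*`. -/
def wedge (x y : L) : Dual ℝ L →ₗ[ℝ] L :=
  (Module.Dual.eval ℝ L x).smulRight y - (Module.Dual.eval ℝ L y).smulRight x

/-- A bivector `r ∈ ⋀²𝔤`, identified with the linear map `r_# : 𝔤* → 𝔤` of the
corresponding skew-symmetric bilinear form on `𝔤*` (so `r(α,β) = β(r_#(α))`). -/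
def IsBivector (r : Dual ℝ L →ₗ[ℝ] L) : Prop := ∀ α β : Dual ℝ L, α (r β) = - β (r α)

/-- The coadjoint action `ad*_u α := α ∘ ad_u`. -/
def coad (u : L) : Dual ℝ L →ₗ[ℝ] Dual ℝ L := (LieAlgebra.ad ℝ L u).dualMap

/-- `J† r` for an endomorphism `J` of `𝔤`; in terms of bilinear forms,
`(J† r)(α,β) = r(α∘J, β) + r(α, β∘J)`. -/
def dag (J : L →ₗ[ℝ] L) (r : Dual ℝ L →ₗ[ℝ] L) : Dual ℝ L →ₗ[ℝ] L :=
  r ∘ₗ J.dualMap + J ∘ₗ r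

/-- The adjoint action `ad_u† r` of `u ∈ 𝔤` on bivectors:
`(ad_u† r)(α,β) = r(ad*_u α, β) + r(α, ad*_u β)`. -/
def adDag (u : L) (r : Dual ℝ L →ₗ[ℝ] L) : Dual ℝ L →ₗ[ℝ] L :=
  dag (LieAlgebra.ad ℝ L u) r

/-- The Schouten bracket `[r,r]` of a bivector with itself:
`[r,r](α,β,γ) = 2α([r_#β, r_#γ]) + 2β([r_#γ, r_#α]) + 2γ([r_#α, r_#β])`. -/
def schouten (r : Dual ℝ L →ₗ[ℝ] L) (α β γ : Dual ℝ L) : ℝ :=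
  2 * α ⁅r β, r γ⁆ + 2 * β ⁅r γ, r α⁆ + 2 * γ ⁅r α, r β⁆

/-- `r` is a solution of the classical Yang–Baxter equation: `[r,r] = 0`. -/
def IsCYBE (r : Dual ℝ L →ₗ[ℝ] L) : Prop := ∀ α β γ : Dual ℝ L, schouten r α β γ = 0

/-- `r` is a solution of the generalized classical Yang–Baxter equation:
`ad_u [r,r] = 0` for all `u`. -/
def IsGCYBE (r : Dual ℝ L →ₗ[ℝ] L) : Prop :=
  ∀ (u : L) (α β γ : Dual ℝ L),
    schouten r (coad u α) β γ + schouten r α (coad u β) γ + schouten r α β (coad u γ) = 0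

/-- A derivation of the Lie algebra `L`. -/
def IsDerivation (J : L →ₗ[ℝ] L) : Prop := ∀ x y : L, J ⁅x, y⁆ = ⁅J x, y⁆ + ⁅x, J y⁆

/-- The 1-cocycle condition for `ξ : 𝔤 → ⋀²𝔤` with respect to the adjoint action:
`ξ([u,v]) = ad_u† ξ(v) − ad_v† ξ(u)`. -/
def IsCocycle (ξ : L →ₗ[ℝ] (Dual ℝ L →ₗ[ℝ] L)) : Prop :=
  ∀ u v : L, ξ ⁅u, v⁆ = adDag u (ξ v) - adDag v (ξ u)

/-- The dual bracket `[α,β]*` associated to `ξ : 𝔤 → ⋀²𝔤`: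
`[α,β]*(u) = ξ(u)(α,β)`. -/
def dualBr (ξ : L →ₗ[ℝ] (Dual ℝ L →ₗ[ℝ] L)) (α β : Dual ℝ L) : Dual ℝ L :=
  (β : L →ₗ[ℝ] ℝ) ∘ₗ (ξ.flip α)

/-- `ξ : 𝔤 → ⋀²𝔤` is a Lie bialgebra structure: `ξ` takes values in bivectors, is a
1-cocycle, and the dual bracket satisfies the Jacobi identity. -/
def IsBialgebra (ξ : L →ₗ[ℝ] (Dual ℝ L →ₗ[ℝ] L)) : Prop :=
  (∀ (u : L) (α β : Dual ℝ L), α (ξ u β) = - β (ξ u α)) ∧ IsCocycle ξ ∧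
  ∀ α β γ : Dual ℝ L,
    dualBr ξ (dualBr ξ α β) γ + dualBr ξ (dualBr ξ β γ) α + dualBr ξ (dualBr ξ γ α) β = 0

end Bivectors

namespace OscAlg

variable {n : ℕ} {lam : Fin n → ℝ} {L : Type} [LieRing L] [LieAlgebra ℝ L]

/-- Membership in `⋀²S`: a bivector `r` with `r_#(e₋₁*) = r_#(e₀*) = 0` and
`Im r_# ⊆ S`. -/
def InW2S (B : OscAlg n lam L) (r : Dual ℝ L →ₗ[ℝ] L) : Prop :=
  IsBivector r ∧ r B.em' = 0 ∧ r B.e0' = 0 ∧ ∀ α : Dual ℝ L, r α ∈ B.S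

/-- `ω_{r₁,r₂}(α,β) = (1/2)(ω(r₁_#(α), r₂_#(β)) + ω(r₂_#(α), r₁_#(β)))`. -/
def omPair (B : OscAlg n lam L) (r₁ r₂ : Dual ℝ L →ₗ[ℝ] L) (α β : Dual ℝ L) : ℝ :=
  (1/2) * (B.om (r₁ α) (r₂ β) + B.om (r₂ α) (r₁ β))

end OscAlg

/-- The derived series of the dual Lie algebra `(𝔤*, [·,·]*)` associated to `ξ`. -/
def dualDerivedSeries {L : Type} [LieRing L] [LieAlgebra ℝ L]
    (ξ : L →ₗ[ℝ] (Dual ℝ L →ₗ[ℝ] L)) : ℕ → Submodule ℝ (Dual ℝ L)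
  | 0 => ⊤
  | k + 1 => Submodule.span ℝ
      {x : Dual ℝ L | ∃ α ∈ dualDerivedSeries ξ k, ∃ β ∈ dualDerivedSeries ξ k,
        x = dualBr ξ α β}

/-- The adjoint operator `ad_α = [α, ·]*` of the dual Lie algebra associated to `ξ`. -/
def adDual {L : Type} [LieRing L] [LieAlgebra ℝ L]
    (ξ : L →ₗ[ℝ] (Dual ℝ L →ₗ[ℝ] L)) (α : Dual ℝ L) : Dual ℝ L →ₗ[ℝ] Dual ℝ L :=
  (ξ.flip α).dualMap

/-!
The cobracket kills the central element `e₀` (as `K = J + ad_{u₀}` does), so `[𝔤*, 𝔤*]*` lies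
in the annihilator of `e₀`. If `α(e₀) = 0` and `u ∈ S`, then `ξ(u)α ∈ ℝ e₀`, because `r` takes
values in `S` and kills `e₋₁*`, and `[S, S] ⊆ ℝ e₀`; hence for `α, β` vanishing on `e₀` the form
`[α, β]*` vanishes on `S ⊕ ℝ e₀` and is a multiple of `e₋₁*`. Finally `e₋₁*` kills `r(𝔤*)`,
`[𝔤, 𝔤]` and `e₀`, so `[e₋₁*, e₋₁*]* = 0` and the derived series stops at the third step.

The trace of `ad_α` equals the trace of its transpose `u ↦ ξ(u)α`. On the basis, the diagonal
entries at `e₋₁` and `e₀` vanish, and the pair `eᵢ, ěᵢ` contributes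
`α(e₀) (r(ěᵢ*, eᵢ*) − r(eᵢ*, ěᵢ*))` plus `2α(e₀)` times `eᵢ*(K eᵢ) + ěᵢ*(K ěᵢ) = e₀*(K e₀) = 0`,
the last identity coming from `e₀ = [eᵢ, ěᵢ]` and `K` being a derivation.
Hence `tr ad_α = −2 α(e₀) ∑ᵢ r(eᵢ*, ěᵢ*)`.
-/

section Bivectors

variable {L : Type} [LieRing L] [LieAlgebra ℝ L]

@[simp] lemma wedge_apply (x y : L) (α : Dual ℝ L) : wedge x y α = α x • y - α y • x := rfl

lemma coad_apply (u : L) (α : Dual ℝ L) (x : L) : coad u α x = α ⁅u, x⁆ := rfl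

@[simp] lemma adDag_apply (u : L) (r : Dual ℝ L →ₗ[ℝ] L) (α : Dual ℝ L) :
    adDag u r α = r (coad u α) + ⁅u, r α⁆ := rfl

lemma dualBr_apply (ξ : L →ₗ[ℝ] (Dual ℝ L →ₗ[ℝ] L)) (α β : Dual ℝ L) (u : L) :
    dualBr ξ α β u = β (ξ u α) := rfl

lemma IsDerivation.add {D D' : L →ₗ[ℝ] L} (hD : IsDerivation D) (hD' : IsDerivation D') :
    IsDerivation (D + D') := fun x y => by
  simp only [LinearMap.add_apply, hD x y, hD' x y, add_lie, lie_add]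
  abel

lemma isDerivation_ad (u : L) : IsDerivation (LieAlgebra.ad ℝ L u : L →ₗ[ℝ] L) := fun x y =>
  leibniz_lie u x y

lemma trace_adDual [FiniteDimensional ℝ L] (ξ : L →ₗ[ℝ] (Dual ℝ L →ₗ[ℝ] L)) (α : Dual ℝ L) :
    trace ℝ (Dual ℝ L) (adDual ξ α) = trace ℝ L (ξ.flip α) :=
  trace_transpose' _

lemma dualDerivedSeries_succ_le {ξ : L →ₗ[ℝ] (Dual ℝ L →ₗ[ℝ] L)} {k : ℕ}
    {P : Submodule ℝ (Dual ℝ L)}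
    (h : ∀ α ∈ dualDerivedSeries ξ k, ∀ β ∈ dualDerivedSeries ξ k, dualBr ξ α β ∈ P) :
    dualDerivedSeries ξ (k + 1) ≤ P :=
  Submodule.span_le.mpr fun _ ⟨α, hα, β, hβ, hx⟩ => hx ▸ h α hα β hβ

end Bivectors

namespace OscAlg

variable {n : ℕ} {lam : Fin n → ℝ} {L : Type} [LieRing L] [LieAlgebra ℝ L] (B : OscAlg n lam L)

@[simp] lemma em'_em : B.em' B.em = 1 := by simp [em', em]
@[simp] lemma em'_e0 : B.em' B.e0 = 0 := by simp [em', e0]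
@[simp] lemma em'_e (j : Fin n) : B.em' (B.e j) = 0 := by simp [em', e]
@[simp] lemma em'_f (j : Fin n) : B.em' (B.f j) = 0 := by simp [em', f]
@[simp] lemma e0'_e0 : B.e0' B.e0 = 1 := by simp [e0', e0]
@[simp] lemma e0'_e (j : Fin n) : B.e0' (B.e j) = 0 := by simp [e0', e]
@[simp] lemma e0'_f (j : Fin n) : B.e0' (B.f j) = 0 := by simp [e0', f]
@[simp] lemma e'_em (i : Fin n) : B.e' i B.em = 0 := by simp [e', em]
@[simp] lemma e'_e0 (i : Fin n) : B.e' i B.e0 = 0 := by simp [e', e0]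
@[simp] lemma e'_e (i j : Fin n) : B.e' i (B.e j) = if j = i then 1 else 0 := by
  simp [e', e, Finsupp.single_apply]
@[simp] lemma e'_f (i j : Fin n) : B.e' i (B.f j) = 0 := by simp [e', f]
@[simp] lemma f'_em (i : Fin n) : B.f' i B.em = 0 := by simp [f', em]
@[simp] lemma f'_e0 (i : Fin n) : B.f' i B.e0 = 0 := by simp [f', e0]
@[simp] lemma f'_e (i j : Fin n) : B.f' i (B.e j) = 0 := by simp [f', e]
@[simp] lemma f'_f (i j : Fin n) : B.f' i (B.f j) = if j = i then 1 else 0 := by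
  simp [f', f, Finsupp.single_apply]

@[simp] lemma basis_inl_zero : B.basis (Sum.inl 0) = B.em := rfl
@[simp] lemma basis_inl_one : B.basis (Sum.inl 1) = B.e0 := rfl
@[simp] lemma basis_inr_inl (j : Fin n) : B.basis (Sum.inr (Sum.inl j)) = B.e j := rfl
@[simp] lemma basis_inr_inr (j : Fin n) : B.basis (Sum.inr (Sum.inr j)) = B.f j := rfl

@[simp] lemma lie_em_e (j : Fin n) : ⁅B.em, B.e j⁆ = lam j • B.f j := B.bracket_em_e j
@[simp] lemma lie_em_f (j : Fin n) : ⁅B.em, B.f j⁆ = -lam j • B.e j := B.bracket_em_f j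
@[simp] lemma lie_e_f (i j : Fin n) : ⁅B.e i, B.f j⁆ = if i = j then B.e0 else 0 :=
  B.bracket_e_f i j
@[simp] lemma lie_e_e (i j : Fin n) : ⁅B.e i, B.e j⁆ = 0 := B.bracket_e_e i j
@[simp] lemma lie_f_f (i j : Fin n) : ⁅B.f i, B.f j⁆ = 0 := B.bracket_f_f i j
@[simp] lemma lie_e0_left (x : L) : ⁅B.e0, x⁆ = 0 := B.bracket_e0 x
@[simp] lemma lie_e0_right (x : L) : ⁅x, B.e0⁆ = 0 := by
  rw [← lie_skew, lie_e0_left, neg_zero]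
@[simp] lemma lie_e_em (j : Fin n) : ⁅B.e j, B.em⁆ = -(lam j • B.f j) := by
  rw [← lie_skew, lie_em_e]
@[simp] lemma lie_f_em (j : Fin n) : ⁅B.f j, B.em⁆ = lam j • B.e j := by
  rw [← lie_skew, lie_em_f, neg_smul, neg_neg]
@[simp] lemma lie_f_e (i j : Fin n) : ⁅B.f i, B.e j⁆ = -(if j = i then B.e0 else 0) := by
  rw [← lie_skew, lie_e_f]

lemma coad_e0 : coad B.e0 = 0 := by
  ext α x
  simp [coad_apply]

lemma e_mem_S (i : Fin n) : B.e i ∈ B.S := Submodule.subset_span (Or.inl ⟨i, rfl⟩)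

lemma f_mem_S (i : Fin n) : B.f i ∈ B.S := Submodule.subset_span (Or.inr ⟨i, rfl⟩)

lemma em'_of_mem_S {x : L} (hx : x ∈ B.S) : B.em' x = 0 := by
  suffices B.S ≤ LinearMap.ker B.em' from this hx
  refine Submodule.span_le.mpr ?_
  rintro _ (⟨j, rfl⟩ | ⟨j, rfl⟩) <;> simp

lemma em'_lie (x y : L) : B.em' ⁅x, y⁆ = 0 := by
  suffices (LieAlgebra.ad ℝ L : L →ₗ[ℝ] Module.End ℝ L).compr₂ B.em' = 0 from
    LinearMap.congr_fun₂ this x y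
  refine LinearMap.ext_basis B.basis B.basis fun i j => ?_
  rcases i with i | i | i <;> rcases j with j | j | j <;> (try fin_cases i) <;>
    (try fin_cases j) <;> simp [apply_ite]

lemma lie_mem_span_e0 {x y : L} (hx : x ∈ B.S) (hy : y ∈ B.S) : ⁅x, y⁆ ∈ ℝ ∙ B.e0 := by
  suffices Submodule.map₂ (LieAlgebra.ad ℝ L : L →ₗ[ℝ] Module.End ℝ L) B.S B.S ≤ ℝ ∙ B.e0 from
    this (Submodule.apply_mem_map₂ _ hx hy)
  rw [S, Submodule.map₂_span_span, Submodule.span_le]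
  rintro _ ⟨_, (⟨i, rfl⟩ | ⟨i, rfl⟩), _, (⟨j, rfl⟩ | ⟨j, rfl⟩), rfl⟩ <;>
    simp [apply_ite, Submodule.mem_span_singleton_self]

lemma eq_smul_em'_of_forall_mem_S {γ : Dual ℝ L} (h0 : γ B.e0 = 0)
    (hS : ∀ x ∈ B.S, γ x = 0) : γ = γ B.em • B.em' := by
  refine B.basis.ext fun i => ?_
  rcases i with i | i | i
  · fin_cases i <;> simp [h0]
  · simpa using hS _ (B.e_mem_S i)
  · simpa using hS _ (B.f_mem_S i)

lemma e0'_lie_f (i : Fin n) (x : L) : B.e0' ⁅x, B.f i⁆ = B.e' i x := by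
  suffices B.e0' ∘ₗ (LieAlgebra.ad ℝ L (B.f i) : L →ₗ[ℝ] L) = -B.e' i by
    rw [← lie_skew, map_neg, neg_eq_iff_eq_neg]
    exact LinearMap.congr_fun this x
  refine B.basis.ext fun j => ?_
  rcases j with j | j | j
  · fin_cases j <;> simp
  · simp [apply_ite]
  · simp

lemma e0'_e_lie (i : Fin n) (x : L) : B.e0' ⁅B.e i, x⁆ = B.f' i x := by
  suffices B.e0' ∘ₗ (LieAlgebra.ad ℝ L (B.e i) : L →ₗ[ℝ] L) = B.f' i from
    LinearMap.congr_fun this x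
  refine B.basis.ext fun j => ?_
  rcases j with j | j | j
  · fin_cases j <;> simp
  · simp
  · simp [apply_ite, eq_comm]

lemma e'_e_add_f'_f_of_isDerivation {D : L →ₗ[ℝ] L} (hD : IsDerivation D) (i : Fin n) :
    B.e' i (D (B.e i)) + B.f' i (D (B.f i)) = B.e0' (D B.e0) := by
  have h := congrArg B.e0' (hD (B.e i) (B.f i))
  rw [lie_e_f, if_pos rfl, map_add, e0'_lie_f, e0'_e_lie] at h
  exact h.symm

lemma coad_e (i : Fin n) (α : Dual ℝ L) :
    coad (B.e i) α = (-(lam i * α (B.f i))) • B.em' + α B.e0 • B.f' i := by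
  refine B.basis.ext fun j => ?_
  rcases j with j | j | j
  · fin_cases j <;> simp [coad]
  · simp [coad]
  · by_cases h : i = j
    · subst h; simp [coad]
    · simp [coad, h, Ne.symm h]

lemma coad_f (i : Fin n) (α : Dual ℝ L) :
    coad (B.f i) α = (lam i * α (B.e i)) • B.em' + (-(α B.e0)) • B.e' i := by
  refine B.basis.ext fun j => ?_
  rcases j with j | j | j
  · fin_cases j <;> simp [coad]
  · by_cases h : i = j
    · subst h; simp [coad]
    · simp [coad, Ne.symm h]
  · simp [coad]

lemma trace_eq_sum (T : L →ₗ[ℝ] L) :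
    trace ℝ L T = B.em' (T B.em) + B.e0' (T B.e0)
      + ∑ i, (B.e' i (T (B.e i)) + B.f' i (T (B.f i))) := by
  rw [trace_eq_matrix_trace ℝ B.basis, Matrix.trace, Fintype.sum_sum_type, Fin.sum_univ_two,
    Fintype.sum_sum_type, ← Finset.sum_add_distrib]
  simp only [Matrix.diag, LinearMap.toMatrix_apply]
  rfl

lemma apply_lie_eq_zero_of_mem_S {γ : Dual ℝ L} (hγ : γ B.e0 = 0)
    {x y : L} (hx : x ∈ B.S) (hy : y ∈ B.S) : γ ⁅x, y⁆ = 0 := by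
  obtain ⟨c, hc⟩ := Submodule.mem_span_singleton.mp (B.lie_mem_span_e0 hx hy)
  rw [← hc, map_smul, hγ, smul_zero]

def IsCobracketOf (r : Dual ℝ L →ₗ[ℝ] L) (K : L →ₗ[ℝ] L) (ξ : L →ₗ[ℝ] (Dual ℝ L →ₗ[ℝ] L)) :
    Prop :=
  ∀ u, ξ u = adDag u r + (2 : ℝ) • wedge B.e0 (K u)

end OscAlg

namespace OscAlg.IsCobracketOf

variable {n : ℕ} {lam : Fin n → ℝ} {L : Type} [LieRing L] [LieAlgebra ℝ L]
  {B : OscAlg n lam L} {r : Dual ℝ L →ₗ[ℝ] L} {K : L →ₗ[ℝ] L}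
  {ξ : L →ₗ[ℝ] (Dual ℝ L →ₗ[ℝ] L)}

lemma apply (hξ : B.IsCobracketOf r K ξ) (u : L) (α : Dual ℝ L) :
    ξ u α = r (coad u α) + ⁅u, r α⁆ + (2 * α B.e0) • K u - (2 * α (K u)) • B.e0 := by
  rw [hξ u, LinearMap.add_apply, LinearMap.smul_apply, adDag_apply, wedge_apply, smul_sub,
    smul_smul, smul_smul]
  abel

lemma eq_zero_e0 (hξ : B.IsCobracketOf r K ξ) (hK0 : K B.e0 = 0) : ξ B.e0 = 0 := by
  ext α : 1
  simp [hξ.apply, B.coad_e0, hK0]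

lemma em'_apply (hξ : B.IsCobracketOf r K ξ) (hrS : ∀ α, r α ∈ B.S) (u : L)
    (α : Dual ℝ L) : B.em' (ξ u α) = 2 * α B.e0 * B.em' (K u) := by
  simp [hξ.apply, B.em'_of_mem_S (hrS _), B.em'_lie]

lemma dualBr_apply_eq_zero_of_mem_S (hξ : B.IsCobracketOf r K ξ) (hrem : r B.em' = 0)
    (hrS : ∀ α, r α ∈ B.S) {α β : Dual ℝ L} (hα : α B.e0 = 0) (hβ : β B.e0 = 0) {u : L}
    (hu : u ∈ B.S) : dualBr ξ α β u = 0 := by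
  have hcoad : coad u α = coad u α B.em • B.em' :=
    B.eq_smul_em'_of_forall_mem_S (by simp [coad_apply])
      fun x hx => B.apply_lie_eq_zero_of_mem_S hα hu hx
  rw [dualBr_apply, hξ.apply, hcoad, map_smul, hrem]
  simp [B.apply_lie_eq_zero_of_mem_S hβ hu (hrS α), hα, hβ]

lemma dualBr_apply_e0 (hξ : B.IsCobracketOf r K ξ) (hK0 : K B.e0 = 0) (α β : Dual ℝ L) :
    dualBr ξ α β B.e0 = 0 := by
  rw [dualBr_apply, hξ.eq_zero_e0 hK0, LinearMap.zero_apply, map_zero]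

lemma dualDerivedSeries_one_le (hξ : B.IsCobracketOf r K ξ) (hK0 : K B.e0 = 0) :
    dualDerivedSeries ξ 1 ≤ LinearMap.ker (Dual.eval ℝ L B.e0) :=
  dualDerivedSeries_succ_le fun α _ β _ => hξ.dualBr_apply_e0 hK0 α β

lemma dualDerivedSeries_two_le (hξ : B.IsCobracketOf r K ξ) (hK0 : K B.e0 = 0)
    (hrem : r B.em' = 0) (hrS : ∀ α, r α ∈ B.S) :
    dualDerivedSeries ξ 2 ≤ ℝ ∙ B.em' :=
  dualDerivedSeries_succ_le fun α hα β hβ => by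
    have hα0 : α B.e0 = 0 := hξ.dualDerivedSeries_one_le hK0 hα
    have hβ0 : β B.e0 = 0 := hξ.dualDerivedSeries_one_le hK0 hβ
    rw [B.eq_smul_em'_of_forall_mem_S (hξ.dualBr_apply_e0 hK0 α β)
      fun u hu => hξ.dualBr_apply_eq_zero_of_mem_S hrem hrS hα0 hβ0 hu]
    exact Submodule.smul_mem _ _ (Submodule.mem_span_singleton_self _)

lemma dualDerivedSeries_three_eq_bot (hξ : B.IsCobracketOf r K ξ) (hK0 : K B.e0 = 0)
    (hrem : r B.em' = 0) (hrS : ∀ α, r α ∈ B.S) : dualDerivedSeries ξ 3 = ⊥ := by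
  refine eq_bot_iff.mpr (dualDerivedSeries_succ_le fun α hα β hβ => ?_)
  obtain ⟨a, rfl⟩ := Submodule.mem_span_singleton.mp (hξ.dualDerivedSeries_two_le hK0 hrem hrS hα)
  obtain ⟨b, rfl⟩ := Submodule.mem_span_singleton.mp (hξ.dualDerivedSeries_two_le hK0 hrem hrS hβ)
  rw [Submodule.mem_bot]
  ext u
  simp [dualBr_apply, hξ.em'_apply hrS]

lemma e'_apply_e (hξ : B.IsCobracketOf r K ξ) (hrem : r B.em' = 0) (hrS : ∀ α, r α ∈ B.S)
    (i : Fin n) (α : Dual ℝ L) :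
    B.e' i (ξ (B.e i) α) = α B.e0 * B.e' i (r (B.f' i)) + 2 * α B.e0 * B.e' i (K (B.e i)) := by
  simp [hξ.apply, B.coad_e, hrem, B.apply_lie_eq_zero_of_mem_S (B.e'_e0 i) (B.e_mem_S i) (hrS α)]

lemma f'_apply_f (hξ : B.IsCobracketOf r K ξ) (hrem : r B.em' = 0) (hrS : ∀ α, r α ∈ B.S)
    (i : Fin n) (α : Dual ℝ L) :
    B.f' i (ξ (B.f i) α) = -(α B.e0 * B.f' i (r (B.e' i))) + 2 * α B.e0 * B.f' i (K (B.f i)) := by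
  simp [hξ.apply, B.coad_f, hrem, B.apply_lie_eq_zero_of_mem_S (B.f'_e0 i) (B.f_mem_S i) (hrS α)]

lemma trace_flip (hξ : B.IsCobracketOf r K ξ) (hr : IsBivector r) (hrem : r B.em' = 0)
    (hrS : ∀ α, r α ∈ B.S) (hK : IsDerivation K) (hK0 : K B.e0 = 0)
    (hKem : B.em' (K B.em) = 0) (α : Dual ℝ L) :
    trace ℝ L (ξ.flip α) = -2 * α B.e0 * ∑ i, B.f' i (r (B.e' i)) := by
  have hpair : ∀ i, B.e' i (ξ (B.e i) α) + B.f' i (ξ (B.f i) α)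
      = -2 * α B.e0 * B.f' i (r (B.e' i)) := fun i => by
    have hKi := B.e'_e_add_f'_f_of_isDerivation hK i
    rw [hK0, map_zero] at hKi
    rw [hξ.e'_apply_e hrem hrS, hξ.f'_apply_f hrem hrS, hr (B.e' i) (B.f' i)]
    linear_combination 2 * α B.e0 * hKi
  simp only [B.trace_eq_sum, LinearMap.flip_apply, hξ.em'_apply hrS, hKem, hξ.eq_zero_e0 hK0,
    LinearMap.zero_apply, map_zero, hpair, ← Finset.mul_sum]
  ring

end OscAlg.IsCobracketOf

theorem oscillator_dual_solvable_and_unimodular_iff_general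
    {n : ℕ} {lam : Fin n → ℝ}
    {L : Type} [LieRing L] [LieAlgebra ℝ L] (B : OscAlg n lam L)
    (r : Dual ℝ L →ₗ[ℝ] L) (u₀ : L) (J : L →ₗ[ℝ] L)
    (hr : B.InW2S r) (hJ : IsDerivation J)
    (hJem : J B.em = 0) (hJe0 : J B.e0 = 0)
    (ξ : L →ₗ[ℝ] (Dual ℝ L →ₗ[ℝ] L))
    (hform : ∀ u : L,
      ξ u = adDag u r + (2 : ℝ) •
        wedge B.e0 ((J + (LieAlgebra.ad ℝ L u₀ : L →ₗ[ℝ] L)) u)) :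
    (∃ k : ℕ, dualDerivedSeries ξ k = ⊥) ∧
    ((∀ α : Dual ℝ L, LinearMap.trace ℝ (Dual ℝ L) (adDual ξ α) = 0) ↔
      ∑ i : Fin n, B.f' i (r (B.e' i)) = 0) := by
  obtain ⟨hr, hrem, -, hrS⟩ := hr
  have : FiniteDimensional ℝ L := Module.Finite.of_basis B.basis
  have hξ : B.IsCobracketOf r (J + LieAlgebra.ad ℝ L u₀) ξ := hform
  have hK : IsDerivation (J + LieAlgebra.ad ℝ L u₀) := hJ.add (isDerivation_ad u₀)
  have hK0 : (J + LieAlgebra.ad ℝ L u₀ : L →ₗ[ℝ] L) B.e0 = 0 := by simp [hJe0]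
  have hKem : B.em' ((J + LieAlgebra.ad ℝ L u₀ : L →ₗ[ℝ] L) B.em) = 0 := by
    simp [hJem, B.em'_lie]
  refine ⟨⟨3, hξ.dualDerivedSeries_three_eq_bot hK0 hrem hrS⟩, ?_⟩
  simp only [trace_adDual, hξ.trace_flip hr hrem hrS hK hK0 hKem]
  refine ⟨fun h => ?_, fun h α => by rw [h, mul_zero]⟩
  simpa using h B.e0'

/-- **Corollary.** For a Lie bialgebra structure
`ξ(u) = ad_u† r + 2 e₀ ∧ ((J + ad_{u₀})(u))` on a generic oscillator Lie algebra,
the dual Lie algebra `(𝔤_λ*, [·,·]*)` is solvable, and it is unimodular if and only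
if `∑ᵢ r(eᵢ*, ěᵢ*) = 0`. -/
theorem oscillator_dual_solvable_and_unimodular_iff
    {n : ℕ} (hn : 0 < n) {lam : Fin n → ℝ} (hgen : IsGeneric lam)
    {L : Type} [LieRing L] [LieAlgebra ℝ L] (B : OscAlg n lam L)
    (r : Dual ℝ L →ₗ[ℝ] L) (u₀ : L) (J : L →ₗ[ℝ] L)
    (hr : B.InW2S r) (hu₀ : u₀ ∈ B.S) (hJ : IsDerivation J)
    (hJcomm : J ∘ₗ (LieAlgebra.ad ℝ L B.em : L →ₗ[ℝ] L)
      = (LieAlgebra.ad ℝ L B.em : L →ₗ[ℝ] L) ∘ₗ J)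
    (hJem : J B.em = 0) (hJe0 : J B.e0 = 0)
    (ξ : L →ₗ[ℝ] (Dual ℝ L →ₗ[ℝ] L))
    (hform : ∀ u : L,
      ξ u = adDag u r + (2 : ℝ) •
        wedge B.e0 ((J + (LieAlgebra.ad ℝ L u₀ : L →ₗ[ℝ] L)) u))
    (hbial : IsBialgebra ξ) :
    (∃ k : ℕ, dualDerivedSeries ξ k = ⊥) ∧
    ((∀ α : Dual ℝ L, LinearMap.trace ℝ (Dual ℝ L) (adDual ξ α) = 0) ↔
      ∑ i : Fin n, B.f' i (r (B.e' i)) = 0) :=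
  oscillator_dual_solvable_and_unimodular_iff_general B r u₀ J hr hJ hJem hJe0 ξ hform
end
end

section
/- Let (𝔤, ⟨·,·⟩) be an orthogonal Lie algebra and let r ∈ ⋀²𝔤 be a solution of the generalized classical Yang–Baxter equation. Then the connection ∇ on 𝔤* defined by ∇_α β = −ad*_{r_#(α)} β is torsion-free and metric with respect to ⟨·,·⟩*: for all α, β, γ ∈ 𝔤*, ∇_α β − ∇_β α = [α,β]_r and ⟨∇_α β, γ⟩* + ⟨β, ∇_α γ⟩* = 0. -/
open Module LinearMap

noncomputable section

section Orthogonal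

variable {L : Type} [LieRing L] [LieAlgebra ℝ L]

/-- The dual bracket `[α,β]_r := ad*_{r_#(β)} α − ad*_{r_#(α)} β` on `𝔤*` associated
to a solution `r` of the (generalized) classical Yang–Baxter equation. -/
def rBr (r : Dual ℝ L →ₗ[ℝ] L) (α β : Dual ℝ L) : Dual ℝ L :=
  coad (r β) α - coad (r α) β

/-- The left-invariant connection `∇_α β := −ad*_{r_#(α)} β` on the dual Lie group. -/
def nabla (r : Dual ℝ L →ₗ[ℝ] L) (α β : Dual ℝ L) : Dual ℝ L :=
  -(coad (r α) β)

/-- The curvature `R(α,β)γ := ∇_{[α,β]_r} γ − ∇_α ∇_β γ + ∇_β ∇_α γ` of `∇`. -/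
def curv (r : Dual ℝ L →ₗ[ℝ] L) (α β γ : Dual ℝ L) : Dual ℝ L :=
  nabla r (rBr r α β) γ - nabla r α (nabla r β γ) + nabla r β (nabla r α γ)

end Orthogonal

/-! Torsion-freeness is the definition of `[·,·]_r` rewritten. For metricity,
`∇_α = -ad*_{r_#(α)}`, and under `φ` the skewness of `ad_x` for the invariant form becomes
skewness of `ad*_x` for `⟨·,·⟩*`. -/

section Orthogonal

variable {L : Type} [LieRing L] [LieAlgebra ℝ L]

theorem nabla_sub_nabla (r : Dual ℝ L →ₗ[ℝ] L) (α β : Dual ℝ L) :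
    nabla r α β - nabla r β α = rBr r α β := by
  simp only [nabla, rBr]
  abel

theorem coad_skew_of_invariant (k : L →ₗ[ℝ] Dual ℝ L)
    (hsym : ∀ u v : L, k u v = k v u)
    (hinv : ∀ u v w : L, k ⁅u, v⁆ w + k v ⁅u, w⁆ = 0)
    (φ : L ≃ₗ[ℝ] Dual ℝ L) (hφ : ∀ u : L, (φ u : Dual ℝ L) = k u) (x : L) (α β : Dual ℝ L) :
    k (φ.symm (coad x α)) (φ.symm β) + k (φ.symm α) (φ.symm (coad x β)) = 0 := by
  have hk : ∀ ω : Dual ℝ L, k (φ.symm ω) = ω := fun ω => by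
    rw [← hφ, φ.apply_symm_apply]
  calc k (φ.symm (coad x α)) (φ.symm β) + k (φ.symm α) (φ.symm (coad x β))
      = k (φ.symm α) ⁅x, φ.symm β⁆ + k (φ.symm β) ⁅x, φ.symm α⁆ := by
        rw [hsym (φ.symm α), hk, hk, hk, hk]
        rfl
    _ = 0 := by
        rw [hsym (φ.symm β), add_comm]
        exact hinv x (φ.symm α) (φ.symm β)

end Orthogonal

theorem orthogonal_gybe_connection_torsionfree_metric_general
    {L : Type} [LieRing L] [LieAlgebra ℝ L]
    (k : L →ₗ[ℝ] Dual ℝ L)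
    (hsym : ∀ u v : L, k u v = k v u)
    (hinv : ∀ u v w : L, k ⁅u, v⁆ w + k v ⁅u, w⁆ = 0)
    (φ : L ≃ₗ[ℝ] Dual ℝ L) (hφ : ∀ u : L, (φ u : Dual ℝ L) = k u)
    (r : Dual ℝ L →ₗ[ℝ] L) :
    (∀ α β : Dual ℝ L, nabla r α β - nabla r β α = rBr r α β) ∧
    (∀ α β γ : Dual ℝ L,
      k (φ.symm (nabla r α β)) (φ.symm γ) + k (φ.symm β) (φ.symm (nabla r α γ)) = 0) := by
  refine ⟨nabla_sub_nabla r, fun α β γ => ?_⟩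
  simp only [nabla, map_neg, LinearMap.neg_apply]
  rw [← neg_add, coad_skew_of_invariant k hsym hinv φ hφ, neg_zero]

/-- **Theorem.** Let `(𝔤, ⟨·,·⟩)` be an orthogonal Lie algebra (a real Lie algebra with
a nondegenerate symmetric invariant bilinear form, nondegeneracy being recorded by the
induced isomorphism `φ : 𝔤 ≃ 𝔤*`) and `r` a solution of the generalized classical
Yang–Baxter equation.  Then `∇_α β = −ad*_{r_#(α)} β` is torsion-free
(`∇_α β − ∇_β α = [α,β]_r`) and metric with respect to
`⟨α,β⟩* = ⟨φ⁻¹(α), φ⁻¹(β)⟩`. -/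
theorem orthogonal_gybe_connection_torsionfree_metric
    {L : Type} [LieRing L] [LieAlgebra ℝ L]
    (k : L →ₗ[ℝ] Dual ℝ L)
    (hsym : ∀ u v : L, k u v = k v u)
    (hinv : ∀ u v w : L, k ⁅u, v⁆ w + k v ⁅u, w⁆ = 0)
    (φ : L ≃ₗ[ℝ] Dual ℝ L) (hφ : ∀ u : L, (φ u : Dual ℝ L) = k u)
    (r : Dual ℝ L →ₗ[ℝ] L) (hr : IsBivector r) (hgybe : IsGCYBE r) :
    (∀ α β : Dual ℝ L, nabla r α β - nabla r β α = rBr r α β) ∧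
    (∀ α β γ : Dual ℝ L,
      k (φ.symm (nabla r α β)) (φ.symm γ) + k (φ.symm β) (φ.symm (nabla r α γ)) = 0) :=
  orthogonal_gybe_connection_torsionfree_metric_general k hsym hinv φ hφ r
end
end

section
/- Let (𝔤, ⟨·,·⟩) be an orthogonal Lie algebra and let r ∈ ⋀²𝔤 be a solution of the classical Yang–Baxter equation [r,r] = 0. Then the curvature of ∇ vanishes identically: R(α,β)γ = 0 for all α, β, γ ∈ 𝔤*. -/
open Module LinearMap

noncomputable section

section Flatness

variable {L : Type} [LieRing L] [LieAlgebra ℝ L]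

/-- Paired with `δ` and rewritten by the skew-symmetry of `r`, this is `[r,r](α,β,δ) = 0`:
`r_#` is a Lie algebra morphism from `(𝔤*, [·,·]_r)` to `𝔤`. -/
theorem IsCYBE.map_rBr {r : Dual ℝ L →ₗ[ℝ] L} (hcybe : IsCYBE r) (hr : IsBivector r)
    (α β : Dual ℝ L) : r (rBr r α β) = ⁅r α, r β⁆ := by
  rw [← sub_eq_zero, ← Module.forall_dual_apply_eq_zero_iff ℝ]
  intro δ
  have hschouten := hcybe α β δ
  have hskew : β ⁅r δ, r α⁆ = -β ⁅r α, r δ⁆ := by rw [← lie_skew, map_neg]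
  simp only [schouten] at hschouten
  simp only [map_sub, hr δ, rBr, coad, dualMap_apply, LieAlgebra.ad_apply]
  linarith

theorem coad_lie (u v : L) (α : Dual ℝ L) :
    coad ⁅u, v⁆ α = coad v (coad u α) - coad u (coad v α) := by
  ext x
  simp only [coad, dualMap_apply, LieAlgebra.ad_apply, LinearMap.sub_apply, lie_lie, map_sub]

/-- `∇` is flat as soon as `r_#` intertwines `[·,·]_r` with the bracket of `𝔤`, because
`α ↦ -ad*_{r_#(α)}` is then a representation of `(𝔤*, [·,·]_r)`. -/
theorem curv_eq_zero_of_map_rBr {r : Dual ℝ L →ₗ[ℝ] L} {α β : Dual ℝ L}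
    (hrBr : r (rBr r α β) = ⁅r α, r β⁆) (γ : Dual ℝ L) : curv r α β γ = 0 := by
  simp only [curv, nabla, hrBr, coad_lie, map_neg, neg_neg]
  abel

end Flatness

theorem orthogonal_cybe_connection_flat_general
    {L : Type} [LieRing L] [LieAlgebra ℝ L]
    (r : Dual ℝ L →ₗ[ℝ] L) (hr : IsBivector r) (hcybe : IsCYBE r) :
    ∀ α β γ : Dual ℝ L, curv r α β γ = 0 :=
  fun α β => curv_eq_zero_of_map_rBr (hcybe.map_rBr hr α β)

/-- **Theorem (flatness).** Let `(𝔤, ⟨·,·⟩)` be an orthogonal Lie algebra and `r` a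
solution of the classical Yang–Baxter equation `[r,r] = 0`.  Then the curvature of the
connection `∇_α β = −ad*_{r_#(α)} β` vanishes identically. -/
theorem orthogonal_cybe_connection_flat
    {L : Type} [LieRing L] [LieAlgebra ℝ L]
    (k : L →ₗ[ℝ] Dual ℝ L)
    (hsym : ∀ u v : L, k u v = k v u)
    (hinv : ∀ u v w : L, k ⁅u, v⁆ w + k v ⁅u, w⁆ = 0)
    (φ : L ≃ₗ[ℝ] Dual ℝ L) (hφ : ∀ u : L, (φ u : Dual ℝ L) = k u)
    (r : Dual ℝ L →ₗ[ℝ] L) (hr : IsBivector r) (hcybe : IsCYBE r) :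
    ∀ α β γ : Dual ℝ L, curv r α β γ = 0 :=
  orthogonal_cybe_connection_flat_general r hr hcybe
end
end
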